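/- Small-gain dissipation implication for the zero-input subsystems: let δ ∈ (0,1) and c_1 = c_2 = 0. For every i ∈ {1,2} and all x_1, x_2 ∈ ℝ, if (1 − δ)·g(|x_i|) ≥ h(|x_{3−i}|), then sign(x_i)·f_i(x_1, x_2) ≤ −25δ·g(|x_i|). -/

import Mathlib

/-!
Since `g` is odd, `sign x * g x = g |x|`; since `h ≥ 0` and `h y ≤ h |y|`, also
`sign x * h y ≤ h |y|`. Hence for `c = 0`,
`sign x * f(x, y) ≤ -25 g |x| + 25 h |y| ≤ -25 g |x| + 25 (1 - δ) g |x| = -25 δ g |x|`.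
-/

noncomputable section

/-- The constant `a = (4π²n + 3π²)/2`. -/
def a (n : ℕ) : ℝ := (4 * Real.pi ^ 2 * n + 3 * Real.pi ^ 2) / 2

/-- The function `g` from the example. -/
def g (n : ℕ) (r : ℝ) : ℝ :=
  if |r| ≤ a n then
    Real.tanh (2 * r) +
      ∑ i ∈ Finset.Icc 1 n,
        Real.sign r * (1 + Real.sign r * Real.tanh (2 * (r - Real.sign r * (2 * Real.pi ^ 2 * i))))
  else
    Real.sign r * ((2 * n + 1) + (r - Real.sign r * a n) ^ 2)

/-- The function `h` from the example. -/
def h (n : ℕ) (r : ℝ) : ℝ :=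
  Real.sin (r / (2 * Real.pi)) ^ 2 +
    ∑ i ∈ Finset.Icc 1 n,
      (Real.tanh (r - 2 * Real.pi ^ 2 * i) + 1) * Real.sin (r / (2 * Real.pi)) ^ 2

/-- The vector field of subsystem `i`: its own state comes first, the other
subsystem's state second; `c` stands for `‖uᵢ‖_∞ / (a + 1)`. -/
def fvec (n : ℕ) (c : ℝ) (x y : ℝ) : ℝ :=
  -(25 + c) * g n x + 25 * h n y + c ^ 2

theorem Real.strictMono_tanh : StrictMono Real.tanh := fun x y hxy => by
  have hmem (z : ℝ) : Real.tanh z ∈ Set.Ioo (-1) 1 :=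
    ⟨Real.neg_one_lt_tanh z, Real.tanh_lt_one z⟩
  rwa [← Real.strictMonoOn_artanh.lt_iff_lt (hmem x) (hmem y), Real.artanh_tanh,
    Real.artanh_tanh]

theorem Function.Odd.sign_mul_eq_abs {f : ℝ → ℝ} (hf : f.Odd) (x : ℝ) :
    Real.sign x * f x = f |x| := by
  rcases lt_trichotomy x 0 with hx | rfl | hx
  · rw [Real.sign_of_neg hx, abs_of_neg hx, hf.eq]
    ring
  · simp [hf.map_zero]
  · rw [Real.sign_of_pos hx, abs_of_pos hx, one_mul]

theorem sign_mul_le_of_nonneg_of_le {b c : ℝ} (x : ℝ) (hb : 0 ≤ b) (hbc : b ≤ c) :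
    Real.sign x * b ≤ c := by
  rcases Real.sign_apply_eq x with hx | hx | hx <;> rw [hx] <;> linarith

theorem g_odd (n : ℕ) : (g n).Odd := fun r => by
  simp only [g, abs_neg, Real.sign_neg]
  split_ifs
  · rw [show 2 * -r = -(2 * r) by ring, Real.tanh_neg, neg_add, ← Finset.sum_neg_distrib]
    congr 1
    refine Finset.sum_congr rfl fun i _ => ?_
    rw [show 2 * (-r - -Real.sign r * (2 * Real.pi ^ 2 * i)) =
      -(2 * (r - Real.sign r * (2 * Real.pi ^ 2 * i))) by ring, Real.tanh_neg]
    ring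
  · ring

theorem h_nonneg (n : ℕ) (r : ℝ) : 0 ≤ h n r :=
  add_nonneg (sq_nonneg _) <| Finset.sum_nonneg fun i _ =>
    mul_nonneg (by linarith [Real.neg_one_lt_tanh (r - 2 * Real.pi ^ 2 * i)]) (sq_nonneg _)

theorem h_le_h_abs (n : ℕ) (r : ℝ) : h n r ≤ h n |r| := by
  rcases le_or_gt 0 r with hr | hr
  · rw [abs_of_nonneg hr]
  · rw [abs_of_neg hr]
    have hsin : Real.sin (-r / (2 * Real.pi)) ^ 2 = Real.sin (r / (2 * Real.pi)) ^ 2 := by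
      rw [neg_div, Real.sin_neg, neg_sq]
    simp only [h, hsin]
    gcongr with i
    exact Real.strictMono_tanh.monotone (by linarith)

theorem sign_mul_fvec_zero_le (n : ℕ) (x y : ℝ) :
    Real.sign x * fvec n 0 x y ≤ -25 * g n |x| + 25 * h n |y| := by
  have hg := (g_odd n).sign_mul_eq_abs x
  have hh := sign_mul_le_of_nonneg_of_le x (h_nonneg n y) (h_le_h_abs n y)
  calc Real.sign x * fvec n 0 x y = -25 * (Real.sign x * g n x) + 25 * (Real.sign x * h n y) := by
        simp only [fvec]; ring
    _ ≤ -25 * g n |x| + 25 * h n |y| := by rw [hg]; linarith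

theorem small_gain_dissipation_general (n : ℕ) (δ : ℝ) (x₁ x₂ : ℝ) :
    ((1 - δ) * g n |x₁| ≥ h n |x₂| →
      Real.sign x₁ * fvec n 0 x₁ x₂ ≤ -(25 * δ) * g n |x₁|) ∧
    ((1 - δ) * g n |x₂| ≥ h n |x₁| →
      Real.sign x₂ * fvec n 0 x₂ x₁ ≤ -(25 * δ) * g n |x₂|) :=
  ⟨fun H => by linarith [sign_mul_fvec_zero_le n x₁ x₂],
    fun H => by linarith [sign_mul_fvec_zero_le n x₂ x₁]⟩

/-- small-gain dissipation implication for the zero-input subsystems. -/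
theorem small_gain_dissipation (n : ℕ) (δ : ℝ) (hδ : δ ∈ Set.Ioo (0:ℝ) 1) (x₁ x₂ : ℝ) :
    ((1 - δ) * g n |x₁| ≥ h n |x₂| →
      Real.sign x₁ * fvec n 0 x₁ x₂ ≤ -(25 * δ) * g n |x₁|) ∧
    ((1 - δ) * g n |x₂| ≥ h n |x₁| →
      Real.sign x₂ * fvec n 0 x₂ x₁ ≤ -(25 * δ) * g n |x₂|) :=
  small_gain_dissipation_general n δ x₁ x₂

end
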